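/- Let q₁, q₂ : ℝ × ℝ → ℂ be twice continuously differentiable in (x,t) and satisfy the coupled complex short pulse equations q_{i,xt} + q_i + (1/2)((|q₁|² + |q₂|²) q_{i,x})_x = 0 for i = 1,2 everywhere. Then the local conservation law ∂_t √(1 + |q_{1,x}|² + |q_{2,x}|²) + ∂_x ( (1/2)(|q₁|² + |q₂|²) √(1 + |q_{1,x}|² + |q_{2,x}|²) ) = 0 holds at every point (x,t). In particular √(1 + |q_{1,x}|² + |q_{2,x}|²) is a conserved density, corresponding to the conserved Hamiltonian H₀ = ∫ √(1 + |q_{1,x}|² + |q_{2,x}|²) dx. -/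

import Mathlib

open Complex

/-- Partial derivative in the first (space) variable of a complex-valued function. -/
noncomputable def pdx (F : ℝ → ℝ → ℂ) (x t : ℝ) : ℂ := deriv (fun x' => F x' t) x

/-- Partial derivative in the second (time) variable of a complex-valued function. -/
noncomputable def pdt (F : ℝ → ℝ → ℂ) (x t : ℝ) : ℂ := deriv (fun t' => F x t') t

/-- Partial derivative in the first (space) variable of a real-valued function. -/
noncomputable def pdxR (F : ℝ → ℝ → ℝ) (x t : ℝ) : ℝ := deriv (fun x' => F x' t) x

/-- Partial derivative in the second (time) variable of a real-valued function. -/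
noncomputable def pdtR (F : ℝ → ℝ → ℝ) (x t : ℝ) : ℝ := deriv (fun t' => F x t') t

/-!
With `uᵢ = ∂ₓqᵢ`, `r = |q₁|² + |q₂|²` and `ρ = √(1 + |u₁|² + |u₂|²)`, each equation reads
`∂ₜuᵢ = -qᵢ - ½ (r uᵢ)ₓ`. Pairing it with `uᵢ` in the real inner product of `ℂ` and summing,
the terms `⟪uᵢ, qᵢ⟫` add up to `½ rₓ` and supply the `1` in `ρ²`, so that
`ρ ρₜ = -½ rₓ ρ² - ½ r ρ ρₓ`. Dividing by `ρ > 0` gives `ρₜ + (½ r ρ)ₓ = 0`.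
-/

open Function
open scoped InnerProductSpace

section

variable {F : ℝ → ℝ → ℂ} {x t : ℝ}

theorem hasDerivAt_pdx (h : DifferentiableAt ℝ (uncurry F) (x, t)) :
    HasDerivAt (fun x' => F x' t) (pdx F x t) x :=
  (h.comp (f := fun x' => (x', t)) x
    (differentiableAt_id.prodMk (differentiableAt_const t))).hasDerivAt

theorem hasDerivAt_pdt (h : DifferentiableAt ℝ (uncurry F) (x, t)) :
    HasDerivAt (fun t' => F x t') (pdt F x t) t :=
  (h.comp (f := fun t' => (x, t')) t
    ((differentiableAt_const x).prodMk differentiableAt_id)).hasDerivAt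

theorem contDiff_uncurry_pdx {n : WithTop ℕ∞} (h : ContDiff ℝ (n + 1) (uncurry F)) :
    ContDiff ℝ n (uncurry (pdx F)) := by
  have hF : Differentiable ℝ (uncurry F) := h.differentiable (by simp)
  have h_eq : uncurry (pdx F) = fun p => fderiv ℝ (uncurry F) p (1, 0) := by
    funext p
    exact ((hF p).hasFDerivAt.comp_hasDerivAt p.1
      ((hasDerivAt_id p.1).prodMk (hasDerivAt_const p.1 p.2))).deriv
  rw [h_eq]
  exact (h.fderiv_right le_rfl).clm_apply contDiff_const

theorem pdx_norm_sq_add_norm_sq_mul {q₁ q₂ : ℝ → ℝ → ℂ} {q₁' q₂' F' : ℂ}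
    (h₁ : HasDerivAt (fun x' => q₁ x' t) q₁' x) (h₂ : HasDerivAt (fun x' => q₂ x' t) q₂' x)
    (hF : HasDerivAt (fun x' => F x' t) F' x) :
    pdx (fun x' t' => ((‖q₁ x' t'‖ : ℂ) ^ 2 + (‖q₂ x' t'‖ : ℂ) ^ 2) * F x' t') x t =
      (2 * ⟪q₁ x t, q₁'⟫_ℝ + 2 * ⟪q₂ x t, q₂'⟫_ℝ) • F x t
        + (‖q₁ x t‖ ^ 2 + ‖q₂ x t‖ ^ 2) • F' := by
  have hr : HasDerivAt (fun x' => ‖q₁ x' t‖ ^ 2 + ‖q₂ x' t‖ ^ 2)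
      (2 * ⟪q₁ x t, q₁'⟫_ℝ + 2 * ⟪q₂ x t, q₂'⟫_ℝ) x := h₁.norm_sq.add h₂.norm_sq
  convert (hr.ofReal_comp.mul hF).deriv using 1
  · simp only [pdx, Complex.ofReal_add, Complex.ofReal_pow]
    rfl
  · simp only [Complex.real_smul]

theorem ccsp_eq_expanded {q₁ q₂ q : ℝ → ℝ → ℂ} (hq₁ : Differentiable ℝ (uncurry q₁))
    (hq₂ : Differentiable ℝ (uncurry q₂)) (hqx : Differentiable ℝ (uncurry (pdx q)))
    (heq : pdt (pdx q) x t + q x t + (1/2) * pdx (fun x' t' =>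
      ((‖q₁ x' t'‖ : ℂ)^2 + (‖q₂ x' t'‖ : ℂ)^2) * pdx q x' t') x t = 0) :
    pdt (pdx q) x t + q x t + (1 / 2 : ℝ) •
      ((2 * ⟪q₁ x t, pdx q₁ x t⟫_ℝ + 2 * ⟪q₂ x t, pdx q₂ x t⟫_ℝ) • pdx q x t
        + (‖q₁ x t‖ ^ 2 + ‖q₂ x t‖ ^ 2) • pdx (pdx q) x t) = 0 := by
  rw [pdx_norm_sq_add_norm_sq_mul (hasDerivAt_pdx (hq₁ (x, t))) (hasDerivAt_pdx (hq₂ (x, t)))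
    (hasDerivAt_pdx (hqx (x, t)))] at heq
  simpa only [Complex.real_smul, Complex.ofReal_div, Complex.ofReal_one, Complex.ofReal_ofNat]
    using heq

end

section

variable {E : Type*} [NormedAddCommGroup E] [InnerProductSpace ℝ E]

theorem HasDerivAt.sqrt_one_add_norm_sq_add_norm_sq {f g : ℝ → E} {f' g' : E} {s : ℝ}
    (hf : HasDerivAt f f' s) (hg : HasDerivAt g g' s) :
    HasDerivAt (fun y => √(1 + ‖f y‖ ^ 2 + ‖g y‖ ^ 2))
      ((⟪f s, f'⟫_ℝ + ⟪g s, g'⟫_ℝ) / √(1 + ‖f s‖ ^ 2 + ‖g s‖ ^ 2)) s := by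
  have hA : HasDerivAt (fun y => 1 + ‖f y‖ ^ 2 + ‖g y‖ ^ 2)
      (2 * ⟪f s, f'⟫_ℝ + 2 * ⟪g s, g'⟫_ℝ) s :=
    (((hasDerivAt_const s (1 : ℝ)).add hf.norm_sq).add hg.norm_sq).congr_deriv (by ring)
  exact (hA.sqrt (by positivity)).congr_deriv (by ring)

theorem inner_add_inner_eq_of_ccsp {q₁ q₂ u₁ u₂ u₁x u₂x u₁t u₂t : E} {r rx : ℝ}
    (hrx : rx = 2 * ⟪q₁, u₁⟫_ℝ + 2 * ⟪q₂, u₂⟫_ℝ)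
    (h₁ : u₁t + q₁ + (1 / 2 : ℝ) • (rx • u₁ + r • u₁x) = 0)
    (h₂ : u₂t + q₂ + (1 / 2 : ℝ) • (rx • u₂ + r • u₂x) = 0) :
    ⟪u₁, u₁t⟫_ℝ + ⟪u₂, u₂t⟫_ℝ
      = -(rx / 2) * (1 + ‖u₁‖ ^ 2 + ‖u₂‖ ^ 2) - r / 2 * (⟪u₁, u₁x⟫_ℝ + ⟪u₂, u₂x⟫_ℝ) := by
  have e₁ := congrArg (⟪u₁, ·⟫_ℝ) h₁
  have e₂ := congrArg (⟪u₂, ·⟫_ℝ) h₂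
  simp only [inner_add_right, inner_smul_right, inner_zero_right, real_inner_self_eq_norm_sq]
    at e₁ e₂
  rw [real_inner_comm u₁, real_inner_comm u₂] at hrx
  linear_combination e₁ + e₂ + hrx / 2

end

/-- The local conservation law
`∂_t √(1+|q_{1,x}|²+|q_{2,x}|²) + ∂_x ((1/2)(|q₁|²+|q₂|²) √(1+|q_{1,x}|²+|q_{2,x}|²)) = 0`
for solutions of the coupled complex short pulse equations. -/
theorem ccsp_conservation_law
    (q₁ q₂ : ℝ → ℝ → ℂ)
    (hq₁ : ContDiff ℝ 2 (fun p : ℝ × ℝ => q₁ p.1 p.2))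
    (hq₂ : ContDiff ℝ 2 (fun p : ℝ × ℝ => q₂ p.1 p.2))
    (heq₁ : ∀ x t,
      pdt (pdx q₁) x t + q₁ x t
        + (1/2) * pdx (fun x' t' =>
            ((‖q₁ x' t'‖ : ℂ)^2 + (‖q₂ x' t'‖ : ℂ)^2)
              * pdx q₁ x' t') x t = 0)
    (heq₂ : ∀ x t,
      pdt (pdx q₂) x t + q₂ x t
        + (1/2) * pdx (fun x' t' =>
            ((‖q₁ x' t'‖ : ℂ)^2 + (‖q₂ x' t'‖ : ℂ)^2)
              * pdx q₂ x' t') x t = 0) :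
    ∀ x t,
      pdtR (fun x' t' =>
          Real.sqrt (1 + (‖pdx q₁ x' t'‖)^2 + (‖pdx q₂ x' t'‖)^2)) x t
        + pdxR (fun x' t' =>
            (1/2) * ((‖q₁ x' t'‖)^2 + (‖q₂ x' t'‖)^2)
              * Real.sqrt (1 + (‖pdx q₁ x' t'‖)^2
                  + (‖pdx q₂ x' t'‖)^2)) x t
      = 0 := by
  intro x t
  have hq₁d : Differentiable ℝ (uncurry q₁) := hq₁.differentiable (by norm_num)
  have hq₂d : Differentiable ℝ (uncurry q₂) := hq₂.differentiable (by norm_num)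
  have hu₁d : Differentiable ℝ (uncurry (pdx q₁)) :=
    (contDiff_uncurry_pdx (n := 1) hq₁).differentiable one_ne_zero
  have hu₂d : Differentiable ℝ (uncurry (pdx q₂)) :=
    (contDiff_uncurry_pdx (n := 1) hq₂).differentiable one_ne_zero
  have key := inner_add_inner_eq_of_ccsp rfl
    (ccsp_eq_expanded hq₁d hq₂d hu₁d (heq₁ x t)) (ccsp_eq_expanded hq₁d hq₂d hu₂d (heq₂ x t))
  have hρt := (hasDerivAt_pdt (hu₁d (x, t))).sqrt_one_add_norm_sq_add_norm_sq
    (hasDerivAt_pdt (hu₂d (x, t)))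
  have hr : HasDerivAt (fun x' => ‖q₁ x' t‖ ^ 2 + ‖q₂ x' t‖ ^ 2) _ x :=
    (hasDerivAt_pdx (hq₁d (x, t))).norm_sq.add (hasDerivAt_pdx (hq₂d (x, t))).norm_sq
  have hflux : HasDerivAt (fun x' => 1 / 2 * (‖q₁ x' t‖ ^ 2 + ‖q₂ x' t‖ ^ 2)
      * √(1 + ‖pdx q₁ x' t‖ ^ 2 + ‖pdx q₂ x' t‖ ^ 2)) _ x :=
    (hr.const_mul (1 / 2 : ℝ)).mul
      ((hasDerivAt_pdx (hu₁d (x, t))).sqrt_one_add_norm_sq_add_norm_sq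
        (hasDerivAt_pdx (hu₂d (x, t))))
  rw [pdtR, pdxR, hρt.deriv, hflux.deriv, key]
  have hA : 0 < 1 + ‖pdx q₁ x t‖ ^ 2 + ‖pdx q₂ x t‖ ^ 2 := by positivity
  field_simp
  rw [Real.sq_sqrt hA.le]
  ring
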